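/- arXiv:1403.5891 — 3 statements merged into one kernel-verified Lean document; each statement's English description precedes it below -/
import Mathlib

section
/- Let α, β : R → [0,∞) be finitely additive set functions on a ring of sets R, with β bounded. If β is absolutely continuous with respect to α, then the form b is absolutely continuous with respect to the form a: for every sequence (φ_n) of R-simple functions with a(φ_n,φ_n) → 0 and b(φ_n − φ_m, φ_n − φ_m) → 0 as n,m → ∞, one has b(φ_n,φ_n) → 0. -/
open Filter Topology

/-- `s : D → D → ℂ` is a nonnegative Hermitian form: linear in the first argument,
conjugate-symmetric, and with nonnegative diagonal. -/
def IsNonnegHermForm {D : Type*} [AddCommGroup D] [Module ℂ D] (s : D → D → ℂ) : Prop :=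
  (∀ x y z : D, s (x + y) z = s x z + s y z) ∧
  (∀ (c : ℂ) (x y : D), s (c • x) y = c * s x y) ∧
  (∀ x y : D, s x y = (starRingEnd ℂ) (s y x)) ∧
  (∀ x : D, 0 ≤ (s x x).re)

/-- `s` is absolutely continuous with respect to `t`. -/
def FormAC {D : Type*} [AddCommGroup D] [Module ℂ D] (s t : D → D → ℂ) : Prop :=
  ∀ x : ℕ → D,
    Tendsto (fun n => t (x n) (x n)) atTop (𝓝 0) →
    Tendsto (fun p : ℕ × ℕ => s (x p.1 - x p.2) (x p.1 - x p.2)) atTop (𝓝 0) →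
    Tendsto (fun n => s (x n) (x n)) atTop (𝓝 0)

/-- The complex vector space of `R`-simple functions: the span of the indicator
functions `χ_E`, `E ∈ R`. -/
noncomputable def simpleSpan (T : Type*) (R : Set (Set T)) : Submodule ℂ (T → ℂ) :=
  Submodule.span ℂ {f | ∃ E ∈ R, f = E.indicator (fun _ => (1 : ℂ))}

/-- The indicator of a member of `R` belongs to the space of `R`-simple functions. -/
theorem indicator_mem_simpleSpan {T : Type*} {R : Set (Set T)} {E : Set T} (hE : E ∈ R) :
    E.indicator (fun _ => (1 : ℂ)) ∈ simpleSpan T R :=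
  Submodule.subset_span ⟨E, hE, rfl⟩

/-!
Write a simple function `φ` as `∑ v • χ_{φ = v}`. For `E ∈ R` and a height `K > 0`, splitting
the values of `φ` at `K` and applying Cauchy–Schwarz to the large ones gives
`|b(φ, χ_E)| ≤ K β(E) + (b(φ, φ) β(E ∩ {|φ| > K}))^{1/2}`, while Chebyshev gives
`K² α(|φ| > K) ≤ a(φ, φ)`. A `b`-Cauchy sequence is `b`-bounded, so if moreover
`a(φₙ, φₙ) → 0`, absolute continuity of `β` yields `b(φₙ, χ_E) → 0`, hence `b(φₙ, ψ) → 0` for every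
simple `ψ`. Finally, a Cauchy sequence in a pre-inner-product space that is weakly null against its
own terms tends to `0`: `‖φₘ‖² = ⟪φₘ, φₘ - φₙ⟫ + ⟪φₘ, φₙ⟫` and the last term vanishes as `n → ∞`.
-/

open MeasureTheory

section InnerProductSpace

variable {𝕜 E : Type*} [RCLike 𝕜] [SeminormedAddCommGroup E] [InnerProductSpace 𝕜 E]

theorem tendsto_zero_of_cauchySeq_of_tendsto_inner {x : ℕ → E} (hx : CauchySeq x)
    (h : ∀ m, Tendsto (fun n => inner 𝕜 (x m) (x n)) atTop (𝓝 0)) :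
    Tendsto x atTop (𝓝 0) := by
  rw [tendsto_zero_iff_norm_tendsto_zero, Metric.tendsto_atTop]
  intro ε hε
  obtain ⟨N, hN⟩ := Metric.cauchySeq_iff.mp hx (ε / 2) (half_pos hε)
  refine ⟨N, fun m hm => ?_⟩
  have hsq : ‖x m‖ ^ 2 ≤ ‖x m‖ * (ε / 2) := by
    refine ge_of_tendsto (by simpa using ((h m).norm.const_add (‖x m‖ * (ε / 2))))
      (eventually_atTop.mpr ⟨N, fun n hn => ?_⟩)
    calc ‖x m‖ ^ 2 = RCLike.re (inner 𝕜 (x m) (x m - x n)) + RCLike.re (inner 𝕜 (x m) (x n)) := by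
          rw [← map_add, ← inner_add_right, sub_add_cancel, inner_self_eq_norm_sq]
      _ ≤ ‖x m‖ * ‖x m - x n‖ + ‖inner 𝕜 (x m) (x n)‖ := by
          gcongr
          · exact (RCLike.re_le_norm _).trans (norm_inner_le_norm _ _)
          · exact RCLike.re_le_norm _
      _ ≤ ‖x m‖ * (ε / 2) + ‖inner 𝕜 (x m) (x n)‖ := by
          gcongr
          exact (dist_eq_norm (x m) (x n) ▸ hN m hm n hn).le
  have : ‖x m‖ ≤ ε / 2 := by nlinarith [norm_nonneg (x m)]
  rw [Real.dist_eq, sub_zero, abs_norm]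
  linarith

end InnerProductSpace

namespace IsNonnegHermForm

variable {D : Type*} [AddCommGroup D] [Module ℂ D] {s : D → D → ℂ}

lemma map_add_left (hs : IsNonnegHermForm s) (x y z : D) : s (x + y) z = s x z + s y z :=
  hs.1 x y z

lemma map_smul_left (hs : IsNonnegHermForm s) (c : ℂ) (x y : D) : s (c • x) y = c * s x y :=
  hs.2.1 c x y

lemma conj_symm (hs : IsNonnegHermForm s) (x y : D) : starRingEnd ℂ (s y x) = s x y :=
  (hs.2.2.1 x y).symm

lemma re_self_nonneg (hs : IsNonnegHermForm s) (x : D) : 0 ≤ (s x x).re := hs.2.2.2 x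

lemma map_add_right (hs : IsNonnegHermForm s) (x y z : D) : s x (y + z) = s x y + s x z := by
  rw [← hs.conj_symm, hs.map_add_left, map_add, hs.conj_symm, hs.conj_symm]

lemma map_smul_right (hs : IsNonnegHermForm s) (c : ℂ) (x y : D) :
    s x (c • y) = starRingEnd ℂ c * s x y := by
  rw [← hs.conj_symm, hs.map_smul_left, map_mul, hs.conj_symm]

def linearLeft (hs : IsNonnegHermForm s) (y : D) : D →ₗ[ℂ] ℂ where
  toFun x := s x y
  map_add' x z := hs.map_add_left x z y
  map_smul' c x := hs.map_smul_left c x y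

lemma map_zero_right (hs : IsNonnegHermForm s) (x : D) : s x 0 = 0 := by
  simpa using hs.map_smul_right 0 x 0

lemma ofReal_re_self (hs : IsNonnegHermForm s) (x : D) : ((s x x).re : ℂ) = s x x :=
  Complex.conj_eq_iff_re.mp (hs.conj_symm x x)

/-- Mathlib's inner products are conjugate-linear in the first argument, hence the swap. -/
@[reducible] def toCore (hs : IsNonnegHermForm s) : PreInnerProductSpace.Core ℂ D where
  inner u v := s v u
  conj_inner_symm u v := hs.conj_symm v u
  re_inner_nonneg u := hs.re_self_nonneg u
  add_left u v w := hs.map_add_right w u v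
  smul_left u v r := hs.map_smul_right r v u

lemma sqrt_re_self_le_sub_add (hs : IsNonnegHermForm s) (x y : D) :
    √(s x x).re ≤ √(s (x - y) (x - y)).re + √(s y y).re := by
  let : SeminormedAddCommGroup D :=
    InnerProductSpace.Core.toSeminormedAddCommGroup (c := hs.toCore)
  exact norm_le_norm_sub_add x y

theorem exists_eventually_re_self_le (hs : IsNonnegHermForm s) {x : ℕ → D}
    (hcauchy : Tendsto (fun p : ℕ × ℕ => s (x p.1 - x p.2) (x p.1 - x p.2)) atTop (𝓝 0)) :
    ∃ C, ∀ᶠ n in atTop, (s (x n) (x n)).re ≤ C := by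
  obtain ⟨P, hP⟩ := eventually_atTop_prod_self'.mp
    (((Complex.continuous_re.tendsto 0).comp hcauchy).eventually_lt_const
      (by simp : (0 : ℂ).re < 1))
  refine ⟨(1 + √(s (x P) (x P)).re) ^ 2, eventually_atTop.mpr ⟨P, fun n hn => ?_⟩⟩
  rw [← Real.sqrt_le_left (by positivity)]
  calc √(s (x n) (x n)).re ≤ √(s (x n - x P) (x n - x P)).re + √(s (x P) (x P)).re :=
        hs.sqrt_re_self_le_sub_add _ _
    _ ≤ 1 + √(s (x P) (x P)).re := by
        gcongr
        exact Real.sqrt_le_one.mpr (hP n hn P le_rfl).le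

theorem tendsto_self_zero (hs : IsNonnegHermForm s) {x : ℕ → D}
    (hcauchy : Tendsto (fun p : ℕ × ℕ => s (x p.1 - x p.2) (x p.1 - x p.2)) atTop (𝓝 0))
    (hweak : ∀ m, Tendsto (fun n => s (x n) (x m)) atTop (𝓝 0)) :
    Tendsto (fun n => s (x n) (x n)) atTop (𝓝 0) := by
  let : SeminormedAddCommGroup D :=
    InnerProductSpace.Core.toSeminormedAddCommGroup (c := hs.toCore)
  let := InnerProductSpace.ofCore hs.toCore
  have hnorm : ∀ v : D, ((‖v‖ ^ 2 : ℝ) : ℂ) = s v v := fun v => by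
    rw [← hs.ofReal_re_self]
    exact congrArg _ (Real.sq_sqrt (hs.re_self_nonneg v))
  have hx : CauchySeq x := by
    rw [cauchySeq_iff_tendsto_dist_atTop_0]
    have h := ((Complex.continuous_re.tendsto 0).comp hcauchy).sqrt
    simp only [Function.comp_def, Complex.zero_re, Real.sqrt_zero] at h
    simp only [dist_eq_norm]
    exact h
  have := ((tendsto_zero_of_cauchySeq_of_tendsto_inner hx hweak).norm.pow 2).ofReal
  simpa [hnorm] using this

lemma tendsto_of_mem_span (hs : IsNonnegHermForm s) {x : ℕ → D} {S : Set D}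
    (hS : ∀ y ∈ S, Tendsto (fun n => s (x n) y) atTop (𝓝 0)) {y : D}
    (hy : y ∈ Submodule.span ℂ S) : Tendsto (fun n => s (x n) y) atTop (𝓝 0) := by
  induction hy using Submodule.span_induction with
  | mem y hy => exact hS y hy
  | zero => simp [hs.map_zero_right]
  | add y z _ _ hy hz => simpa [hs.map_add_right] using hy.add hz
  | smul c y _ hy => simpa [hs.map_smul_right] using hy.const_mul (starRingEnd ℂ c)

end IsNonnegHermForm

section SimpleFunctions

variable {T : Type*} {R : Set (Set T)}

structure IsRSimple (R : Set (Set T)) (f : T → ℂ) : Prop where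
  finite_range : (Set.range f).Finite
  preimage_mem : ∀ v ≠ 0, f ⁻¹' {v} ∈ R

namespace IsRSimple

variable {f g : T → ℂ}

lemma support_mem (hR : IsSetRing R) (hf : IsRSimple R f) : Function.support f ∈ R := by
  have : Function.support f = ⋃ v ∈ hf.finite_range.toFinset.erase 0, f ⁻¹' {v} := by
    ext t; simp
  rw [this]
  exact hR.biUnion_mem _ fun v hv => hf.preimage_mem v (Finset.ne_of_mem_erase hv)

lemma preimage_inter_preimage_mem (hR : IsSetRing R) (hf : IsRSimple R f) (hg : IsRSimple R g)
    {u w : ℂ} (huw : u ≠ 0 ∨ w ≠ 0) : f ⁻¹' {u} ∩ g ⁻¹' {w} ∈ R := by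
  rcases eq_or_ne u 0 with rfl | hu
  · have hw := huw.resolve_left (not_not.mpr rfl)
    rw [show f ⁻¹' {0} ∩ g ⁻¹' {w} = g ⁻¹' {w} \ Function.support f by ext; simp [and_comm]]
    exact hR.sdiff_mem (hg.preimage_mem w hw) (hf.support_mem hR)
  rcases eq_or_ne w 0 with rfl | hw
  · rw [show f ⁻¹' {u} ∩ g ⁻¹' {0} = f ⁻¹' {u} \ Function.support g by ext; simp]
    exact hR.sdiff_mem (hf.preimage_mem u hu) (hg.support_mem hR)
  · exact hR.inter_mem (hf.preimage_mem u hu) (hg.preimage_mem w hw)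

lemma zero (hR : IsSetRing R) : IsRSimple R (0 : T → ℂ) where
  finite_range := (Set.finite_singleton 0).subset Set.range_const_subset
  preimage_mem v hv := by
    convert hR.empty_mem
    ext; simp [hv.symm]

lemma indicator (hR : IsSetRing R) {E : Set T} (hE : E ∈ R) :
    IsRSimple R (E.indicator fun _ => 1) where
  finite_range := (Set.toFinite {0, 1}).subset <| Set.range_subset_iff.mpr fun t => by
    by_cases ht : t ∈ E <;> simp [ht]
  preimage_mem v hv := by
    rcases eq_or_ne v 1 with rfl | hv1
    · convert hE
      ext t; by_cases ht : t ∈ E <;> simp [ht]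
    · convert hR.empty_mem
      ext t; by_cases ht : t ∈ E <;> simp [ht, hv.symm, hv1.symm]

lemma add (hR : IsSetRing R) (hf : IsRSimple R f) (hg : IsRSimple R g) :
    IsRSimple R (f + g) where
  finite_range := (hf.finite_range.image2 (· + ·) hg.finite_range).subset <|
    Set.range_subset_iff.mpr fun t => Set.mem_image2_of_mem (Set.mem_range_self t)
      (Set.mem_range_self t)
  preimage_mem v hv := by
    have : (f + g) ⁻¹' {v} = ⋃ u ∈ hf.finite_range.toFinset, f ⁻¹' {u} ∩ g ⁻¹' {v - u} := by
      ext t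
      simp only [Set.mem_preimage, Pi.add_apply, Set.mem_singleton_iff, Set.mem_iUnion,
        Set.mem_inter_iff, Set.Finite.mem_toFinset, Set.mem_range, eq_sub_iff_add_eq']
      exact ⟨fun h => ⟨_, ⟨t, rfl⟩, rfl, h⟩, by rintro ⟨_, ⟨i, rfl⟩, hi, h⟩; rwa [hi]⟩
    rw [this]
    refine hR.biUnion_mem _ fun u _ => hf.preimage_inter_preimage_mem hR hg ?_
    rcases eq_or_ne u 0 with rfl | hu
    · simpa using hv
    · exact Or.inl hu

lemma smul (hR : IsSetRing R) (hf : IsRSimple R f) (c : ℂ) : IsRSimple R (c • f) where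
  finite_range := (hf.finite_range.image (c • ·)).subset <|
    Set.range_subset_iff.mpr fun t => Set.mem_image_of_mem _ (Set.mem_range_self t)
  preimage_mem v hv := by
    rcases eq_or_ne c 0 with rfl | hc
    · simpa using (zero hR).preimage_mem v hv
    · rw [show (c • f) ⁻¹' {v} = f ⁻¹' {c⁻¹ * v} by ext; simp [eq_inv_mul_iff_mul_eq₀ hc]]
      exact hf.preimage_mem _ (mul_ne_zero (inv_ne_zero hc) hv)

end IsRSimple

theorem isRSimple_of_mem_simpleSpan (hR : IsSetRing R) {f : T → ℂ} (hf : f ∈ simpleSpan T R) :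
    IsRSimple R f := by
  induction hf using Submodule.span_induction with
  | mem f hf =>
      obtain ⟨E, hE, rfl⟩ := hf
      exact IsRSimple.indicator hR hE
  | zero => exact IsRSimple.zero hR
  | add f g _ _ hf hg => exact hf.add hR hg
  | smul c f _ hf => exact hf.smul hR c

end SimpleFunctions

section LevelSets

variable {T : Type*} {R : Set (Set T)}

open Classical in
/-- `χ E` as an element of `simpleSpan T R`; the junk value `0` for `E ∉ R` makes it total. -/
noncomputable def simpleIndicator (R : Set (Set T)) (E : Set T) : simpleSpan T R :=
  if hE : E ∈ R then ⟨E.indicator fun _ => 1, indicator_mem_simpleSpan hE⟩ else 0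

lemma simpleIndicator_of_mem {E : Set T} (hE : E ∈ R) :
    simpleIndicator R E = ⟨E.indicator fun _ => 1, indicator_mem_simpleSpan hE⟩ :=
  by classical exact dif_pos hE

lemma exists_finset_levelSets (hR : IsSetRing R) (y : simpleSpan T R) :
    ∃ V : Finset ℂ,
      (∀ v ∈ V, (y : T → ℂ) ⁻¹' {v} ∈ R) ∧ ∀ t, (y : T → ℂ) t ≠ 0 → (y : T → ℂ) t ∈ V :=
  have hy := isRSimple_of_mem_simpleSpan hR y.2
  ⟨hy.finite_range.toFinset.erase 0, fun v hv => hy.preimage_mem v (Finset.ne_of_mem_erase hv),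
    fun t ht => by simp [ht]⟩

lemma eq_sum_smul_simpleIndicator {y : simpleSpan T R} {V : Finset ℂ}
    (hV : ∀ v ∈ V, (y : T → ℂ) ⁻¹' {v} ∈ R) (hy : ∀ t, (y : T → ℂ) t ≠ 0 → (y : T → ℂ) t ∈ V) :
    y = ∑ v ∈ V, v • simpleIndicator R ((y : T → ℂ) ⁻¹' {v}) := by
  ext t
  simp only [Submodule.coe_sum, Finset.sum_apply, Submodule.coe_smul, Pi.smul_apply]
  rcases eq_or_ne ((y : T → ℂ) t) 0 with h0 | h0
  · rw [h0, eq_comm]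
    refine Finset.sum_eq_zero fun v hv => ?_
    simp [simpleIndicator_of_mem (hV v hv), h0, or_not_of_imp Eq.symm]
  · rw [Finset.sum_eq_single_of_mem _ (hy t h0)]
    · simp [simpleIndicator_of_mem (hV _ (hy t h0))]
    · intro v hv hne
      simp [simpleIndicator_of_mem (hV v hv), Ne.symm hne]

lemma mem_span_simpleIndicator (hR : IsSetRing R) (y : simpleSpan T R) :
    y ∈ Submodule.span ℂ (simpleIndicator R '' R) := by
  obtain ⟨V, hV, hy⟩ := exists_finset_levelSets hR y
  rw [eq_sum_smul_simpleIndicator hV hy]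
  exact Submodule.sum_mem _ fun v hv =>
    Submodule.smul_mem _ _ (Submodule.subset_span ⟨_, hV v hv, rfl⟩)

end LevelSets

section FormsOfContents

variable {T : Type*} {R : Set (Set T)}

lemma isSetRing_of_nonempty (hne : R.Nonempty) (hunion : ∀ E ∈ R, ∀ F ∈ R, E ∪ F ∈ R)
    (hdiff : ∀ E ∈ R, ∀ F ∈ R, E \ F ∈ R) : IsSetRing R where
  empty_mem := by
    obtain ⟨E, hE⟩ := hne
    simpa using hdiff E hE E hE
  union_mem E F hE hF := hunion E hE F hF
  sdiff_mem E F hE hF := hdiff E hE F hF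

def MeasureTheory.IsSetRing.addContentOfAdditive (hR : IsSetRing R) (m : Set T → ℝ)
    (hadd : ∀ E ∈ R, ∀ F ∈ R, Disjoint E F → m (E ∪ F) = m E + m F) : AddContent ℝ R :=
  hR.addContent_of_union m (by simpa using hadd ∅ hR.empty_mem ∅ hR.empty_mem (by simp))
    fun hE hF => hadd _ hE _ hF

lemma addContent_mono_of_nonneg (hR : IsSetRing R) {μ : AddContent ℝ R}
    (hμ : ∀ E ∈ R, 0 ≤ μ E) {E F : Set T} (hE : E ∈ R) (hF : F ∈ R) (hFE : F ⊆ E) :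
    μ F ≤ μ E := by
  rw [← Set.union_sdiff_cancel hFE, addContent_union hR hF (hR.sdiff_mem hE hF)
    Set.disjoint_sdiff_right]
  linarith [hμ _ (hR.sdiff_mem hE hF)]

def IsFormOf (μ : AddContent ℝ R) (s : simpleSpan T R → simpleSpan T R → ℂ) : Prop :=
  ∀ E ∈ R, ∀ F ∈ R, s (simpleIndicator R E) (simpleIndicator R F) = μ (E ∩ F)

namespace IsFormOf

variable {μ : AddContent ℝ R} {s : simpleSpan T R → simpleSpan T R → ℂ}

lemma apply_sum_smul_simpleIndicator (hsμ : IsFormOf μ s) (hs : IsNonnegHermForm s) {ι : Type*}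
    (I : Finset ι) (c : ι → ℂ) {F : ι → Set T} (hF : ∀ i ∈ I, F i ∈ R) {E : Set T}
    (hE : E ∈ R) :
    s (∑ i ∈ I, c i • simpleIndicator R (F i)) (simpleIndicator R E)
      = ∑ i ∈ I, c i * μ (F i ∩ E) := by
  change hs.linearLeft _ _ = _
  rw [map_sum]
  refine Finset.sum_congr rfl fun i hi => ?_
  rw [map_smul, smul_eq_mul]
  exact congrArg _ (hsμ _ (hF i hi) _ hE)

lemma re_apply_sum_smul_self (hsμ : IsFormOf μ s) (hs : IsNonnegHermForm s) {ι : Type*}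
    (I : Finset ι) (c : ι → ℂ) {F : ι → Set T} (hF : ∀ i ∈ I, F i ∈ R)
    (hdisj : (I : Set ι).PairwiseDisjoint F) :
    (s (∑ i ∈ I, c i • simpleIndicator R (F i)) (∑ i ∈ I, c i • simpleIndicator R (F i))).re
      = ∑ i ∈ I, ‖c i‖ ^ 2 * μ (F i) := by
  set y := ∑ i ∈ I, c i • simpleIndicator R (F i)
  have hdiag : ∀ i ∈ I, s y (simpleIndicator R (F i)) = c i * μ (F i) := fun i hi => by
    rw [hsμ.apply_sum_smul_simpleIndicator hs I c hF (hF i hi),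
      Finset.sum_eq_single_of_mem i hi fun j hj hji => ?_, Set.inter_self]
    rw [Set.disjoint_iff_inter_eq_empty.mp (hdisj hj hi hji), addContent_empty]
    simp
  have hsum : s y y = ∑ i ∈ I, c i * starRingEnd ℂ (c i * μ (F i)) := by
    conv_lhs => rw [show y = ∑ i ∈ I, c i • simpleIndicator R (F i) from rfl]
    change hs.linearLeft _ _ = _
    rw [map_sum]
    refine Finset.sum_congr rfl fun i hi => ?_
    rw [map_smul, smul_eq_mul, ← hdiag i hi]
    exact congrArg _ (hs.conj_symm _ _).symm
  rw [hsum, Complex.re_sum]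
  refine Finset.sum_congr rfl fun i _ => ?_
  rw [map_mul, Complex.conj_ofReal, ← mul_assoc, Complex.mul_conj, Complex.normSq_eq_norm_sq]
  norm_cast

end IsFormOf

end FormsOfContents

section Estimates

variable {T : Type*} {R : Set (Set T)}

lemma setOf_lt_norm_eq_biUnion {f : T → ℂ} {V : Finset ℂ} (hf : ∀ t, f t ≠ 0 → f t ∈ V)
    {K : ℝ} (hK : 0 ≤ K) :
    {t | K < ‖f t‖} = ⋃ v ∈ V.filter (K < ‖·‖), f ⁻¹' {v} := by
  ext t
  simp only [Set.mem_ofPred_eq, Set.mem_iUnion, Set.mem_preimage, Set.mem_singleton_iff,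
    Finset.mem_filter, exists_prop]
  refine ⟨fun ht => ⟨f t, ⟨hf t ?_, ht⟩, rfl⟩, fun ⟨v, ⟨_, hv⟩, hfv⟩ => hfv ▸ hv⟩
  exact norm_pos_iff.mp (hK.trans_lt ht)

lemma setOf_lt_norm_mem (hR : IsSetRing R) (y : simpleSpan T R) {K : ℝ} (hK : 0 ≤ K) :
    {t | K < ‖(y : T → ℂ) t‖} ∈ R := by
  obtain ⟨V, hV, hy⟩ := exists_finset_levelSets hR y
  rw [setOf_lt_norm_eq_biUnion hy hK]
  exact hR.biUnion_mem _ fun v hv => hV v (Finset.mem_of_mem_filter v hv)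

namespace IsFormOf

variable {μ : AddContent ℝ R} {s : simpleSpan T R → simpleSpan T R → ℂ}

lemma apply_simpleIndicator_eq_sum (hsμ : IsFormOf μ s) (hs : IsNonnegHermForm s)
    {y : simpleSpan T R} {V : Finset ℂ} (hV : ∀ v ∈ V, (y : T → ℂ) ⁻¹' {v} ∈ R)
    (hy : ∀ t, (y : T → ℂ) t ≠ 0 → (y : T → ℂ) t ∈ V) {E : Set T} (hE : E ∈ R) :
    s y (simpleIndicator R E) = ∑ v ∈ V, v * μ ((y : T → ℂ) ⁻¹' {v} ∩ E) := by
  conv_lhs => rw [eq_sum_smul_simpleIndicator hV hy]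
  exact hsμ.apply_sum_smul_simpleIndicator hs V id hV hE

lemma re_self_eq_sum (hsμ : IsFormOf μ s) (hs : IsNonnegHermForm s)
    {y : simpleSpan T R} {V : Finset ℂ} (hV : ∀ v ∈ V, (y : T → ℂ) ⁻¹' {v} ∈ R)
    (hy : ∀ t, (y : T → ℂ) t ≠ 0 → (y : T → ℂ) t ∈ V) :
    (s y y).re = ∑ v ∈ V, ‖v‖ ^ 2 * μ ((y : T → ℂ) ⁻¹' {v}) := by
  have h := hsμ.re_apply_sum_smul_self hs V id hV (Set.pairwiseDisjoint_fiber _ _)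
  simp only [id] at h
  rwa [← eq_sum_smul_simpleIndicator hV hy] at h

theorem sq_mul_setOf_lt_norm_le (hR : IsSetRing R) (hsμ : IsFormOf μ s) (hs : IsNonnegHermForm s)
    (hμ : ∀ E ∈ R, 0 ≤ μ E) (y : simpleSpan T R) {K : ℝ} (hK : 0 ≤ K) :
    K ^ 2 * μ {t | K < ‖(y : T → ℂ) t‖} ≤ (s y y).re := by
  obtain ⟨V, hV, hy⟩ := exists_finset_levelSets hR y
  have hVμ : ∀ v ∈ V, 0 ≤ μ ((y : T → ℂ) ⁻¹' {v}) := fun v hv => hμ _ (hV v hv)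
  rw [setOf_lt_norm_eq_biUnion hy hK, addContent_biUnion_eq hR
      (fun v hv => hV v (Finset.mem_of_mem_filter v hv)) (Set.pairwiseDisjoint_fiber _ _),
    hsμ.re_self_eq_sum hs hV hy, Finset.mul_sum]
  calc ∑ v ∈ V.filter (K < ‖·‖), K ^ 2 * μ ((y : T → ℂ) ⁻¹' {v})
      ≤ ∑ v ∈ V.filter (K < ‖·‖), ‖v‖ ^ 2 * μ ((y : T → ℂ) ⁻¹' {v}) := by
        refine Finset.sum_le_sum fun v hv => ?_
        rw [Finset.mem_filter] at hv
        gcongr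
        · exact hVμ v hv.1
        · exact hv.2.le
    _ ≤ ∑ v ∈ V, ‖v‖ ^ 2 * μ ((y : T → ℂ) ⁻¹' {v}) :=
        Finset.sum_le_sum_of_subset_of_nonneg (Finset.filter_subset _ _) fun v hv _ =>
          mul_nonneg (sq_nonneg _) (hVμ v hv)

theorem norm_apply_simpleIndicator_le (hR : IsSetRing R) (hsμ : IsFormOf μ s)
    (hs : IsNonnegHermForm s) (hμ : ∀ E ∈ R, 0 ≤ μ E) (y : simpleSpan T R) {K : ℝ} (hK : 0 ≤ K)
    {E : Set T} (hE : E ∈ R) :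
    ‖s y (simpleIndicator R E)‖
      ≤ K * μ E + √((s y y).re * μ ({t | K < ‖(y : T → ℂ) t‖} ∩ E)) := by
  obtain ⟨V, hV, hy⟩ := exists_finset_levelSets hR y
  set L : ℂ → Set T := fun v => (y : T → ℂ) ⁻¹' {v} ∩ E
  have hLR : ∀ v ∈ V, L v ∈ R := fun v hv => hR.inter_mem (hV v hv) hE
  have hL0 : ∀ v ∈ V, 0 ≤ μ (L v) := fun v hv => hμ _ (hLR v hv)
  have hLdisj : ∀ W : Finset ℂ, (W : Set ℂ).PairwiseDisjoint L := fun W =>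
    (Set.pairwiseDisjoint_fiber _ _).mono fun v => Set.inter_subset_left
  have hsmall : ∑ v ∈ V.filter (¬ K < ‖·‖), ‖v‖ * μ (L v) ≤ K * μ E :=
    calc ∑ v ∈ V.filter (¬ K < ‖·‖), ‖v‖ * μ (L v)
        ≤ ∑ v ∈ V.filter (¬ K < ‖·‖), K * μ (L v) := by
          refine Finset.sum_le_sum fun v hv => ?_
          rw [Finset.mem_filter, not_lt] at hv
          exact mul_le_mul_of_nonneg_right hv.2 (hL0 v hv.1)
      _ = K * μ (⋃ v ∈ V.filter (¬ K < ‖·‖), L v) := by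
          rw [addContent_biUnion_eq hR (fun v hv => hLR v (Finset.mem_of_mem_filter v hv))
            (hLdisj _), Finset.mul_sum]
      _ ≤ K * μ E := by
          gcongr
          exact addContent_mono_of_nonneg hR hμ hE
            (hR.biUnion_mem _ fun v hv => hLR v (Finset.mem_of_mem_filter v hv))
            (Set.iUnion₂_subset fun _ _ => Set.inter_subset_right)
  have hbig : (∑ v ∈ V.filter (K < ‖·‖), ‖v‖ * μ (L v)) ^ 2
      ≤ (s y y).re * μ ({t | K < ‖(y : T → ℂ) t‖} ∩ E) :=
    calc (∑ v ∈ V.filter (K < ‖·‖), ‖v‖ * μ (L v)) ^ 2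
        ≤ (∑ v ∈ V.filter (K < ‖·‖), ‖v‖ ^ 2 * μ (L v)) * ∑ v ∈ V.filter (K < ‖·‖), μ (L v) :=
          Finset.sum_sq_le_sum_mul_sum_of_sq_le_mul _
            (fun v hv => mul_nonneg (sq_nonneg _) (hL0 v (Finset.mem_of_mem_filter v hv)))
            (fun v hv => hL0 v (Finset.mem_of_mem_filter v hv))
            fun v _ => (by ring : (‖v‖ * μ (L v)) ^ 2 = _).le
      _ ≤ (s y y).re * μ ({t | K < ‖(y : T → ℂ) t‖} ∩ E) := by
          rw [setOf_lt_norm_eq_biUnion hy hK, Set.iUnion₂_inter, addContent_biUnion_eq hR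
            (fun v hv => hLR v (Finset.mem_of_mem_filter v hv)) (hLdisj _),
            hsμ.re_self_eq_sum hs hV hy]
          gcongr
          · exact Finset.sum_nonneg fun v hv => hL0 v (Finset.mem_of_mem_filter v hv)
          · refine (Finset.sum_le_sum_of_subset_of_nonneg (Finset.filter_subset _ _) fun v hv _ =>
              mul_nonneg (sq_nonneg _) (hL0 v hv)).trans (Finset.sum_le_sum fun v hv => ?_)
            gcongr
            exact addContent_mono_of_nonneg hR hμ (hV v hv) (hLR v hv) Set.inter_subset_left
  calc ‖s y (simpleIndicator R E)‖ = ‖∑ v ∈ V, v * (μ (L v) : ℂ)‖ := by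
        rw [hsμ.apply_simpleIndicator_eq_sum hs hV hy hE]
    _ ≤ ∑ v ∈ V, ‖v‖ * μ (L v) := by
        refine (norm_sum_le _ _).trans (Finset.sum_le_sum fun v hv => ?_)
        rw [norm_mul, Complex.norm_real, Real.norm_of_nonneg (hL0 v hv)]
    _ = ∑ v ∈ V.filter (¬ K < ‖·‖), ‖v‖ * μ (L v) + ∑ v ∈ V.filter (K < ‖·‖), ‖v‖ * μ (L v) :=
        (Finset.sum_filter_not_add_sum_filter _ _ _).symm
    _ ≤ K * μ E + √((s y y).re * μ ({t | K < ‖(y : T → ℂ) t‖} ∩ E)) :=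
        add_le_add hsmall ((le_abs_self _).trans (Real.abs_le_sqrt hbig))

end IsFormOf

theorem tendsto_apply_simpleIndicator (hR : IsSetRing R) {α β : AddContent ℝ R}
    (hα0 : ∀ E ∈ R, 0 ≤ α E) (hβ0 : ∀ E ∈ R, 0 ≤ β E)
    (hac : ∀ ε : ℝ, 0 < ε → ∃ δ : ℝ, 0 < δ ∧ ∀ E ∈ R, α E < δ → β E < ε)
    {a b : simpleSpan T R → simpleSpan T R → ℂ} (haα : IsFormOf α a) (hbβ : IsFormOf β b)
    (ha : IsNonnegHermForm a) (hb : IsNonnegHermForm b) {x : ℕ → simpleSpan T R}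
    (hA : Tendsto (fun n => a (x n) (x n)) atTop (𝓝 0)) {C : ℝ}
    (hC : ∀ᶠ n in atTop, (b (x n) (x n)).re ≤ C) {E : Set T} (hE : E ∈ R) :
    Tendsto (fun n => b (x n) (simpleIndicator R E)) atTop (𝓝 0) := by
  rw [Metric.tendsto_nhds]
  intro ε hε
  set K := ε / (2 * (β E + 1))
  have hK : 0 < K := div_pos hε (by linarith [hβ0 E hE])
  obtain ⟨η, hη, hCη⟩ := exists_pos_mul_lt (by positivity : 0 < (ε / 2) ^ 2) C
  obtain ⟨δ, hδ, hδβ⟩ := hac η hη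
  have hAsmall : ∀ᶠ n in atTop, ‖a (x n) (x n)‖ < K ^ 2 * δ :=
    (tendsto_zero_iff_norm_tendsto_zero.mp hA).eventually_lt_const (by positivity)
  filter_upwards [hAsmall, hC] with n hAn hCn
  set G := {t | K < ‖(x n : T → ℂ) t‖}
  have hGR : G ∈ R := setOf_lt_norm_mem hR (x n) hK.le
  have hαG : α (G ∩ E) < δ := by
    have hcheb := haα.sq_mul_setOf_lt_norm_le hR ha hα0 (x n) hK.le
    have hmono := addContent_mono_of_nonneg hR hα0 hGR (hR.inter_mem hGR hE) Set.inter_subset_left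
    have hre := Complex.re_le_norm (a (x n) (x n))
    nlinarith
  have hβG := hδβ _ (hR.inter_mem hGR hE) hαG
  have hsqrt : √((b (x n) (x n)).re * β (G ∩ E)) < ε / 2 := by
    rw [Real.sqrt_lt' (by positivity)]
    have := hb.re_self_nonneg (x n)
    have := hβ0 _ (hR.inter_mem hGR hE)
    nlinarith
  have hKE : K * β E ≤ ε / 2 := by
    rw [div_mul_eq_mul_div, div_le_iff₀ (by linarith [hβ0 E hE])]
    nlinarith [hβ0 E hE]
  rw [dist_zero_right]
  linarith [hbβ.norm_apply_simpleIndicator_le hR hb hβ0 (x n) hK.le hE]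

end Estimates

theorem form_abs_continuous_of_set_function_abs_continuous_general
    {T : Type*} (R : Set (Set T))
    (hne : R.Nonempty)
    (hunion : ∀ E ∈ R, ∀ F ∈ R, E ∪ F ∈ R)
    (hdiff : ∀ E ∈ R, ∀ F ∈ R, E \ F ∈ R)
    (α β : Set T → ℝ)
    (hα0 : ∀ E ∈ R, 0 ≤ α E)
    (hαadd : ∀ E ∈ R, ∀ F ∈ R, Disjoint E F → α (E ∪ F) = α E + α F)
    (hβ0 : ∀ E ∈ R, 0 ≤ β E)
    (hβadd : ∀ E ∈ R, ∀ F ∈ R, Disjoint E F → β (E ∪ F) = β E + β F)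
    (hac : ∀ ε : ℝ, 0 < ε → ∃ δ : ℝ, 0 < δ ∧ ∀ E ∈ R, α E < δ → β E < ε)
    (a b : simpleSpan T R → simpleSpan T R → ℂ)
    (haform : IsNonnegHermForm a) (hbform : IsNonnegHermForm b)
    (ha : ∀ (E : Set T) (hE : E ∈ R) (F : Set T) (hF : F ∈ R),
      a ⟨E.indicator (fun _ => (1 : ℂ)), indicator_mem_simpleSpan hE⟩
        ⟨F.indicator (fun _ => (1 : ℂ)), indicator_mem_simpleSpan hF⟩ = (α (E ∩ F) : ℂ))
    (hb : ∀ (E : Set T) (hE : E ∈ R) (F : Set T) (hF : F ∈ R),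
      b ⟨E.indicator (fun _ => (1 : ℂ)), indicator_mem_simpleSpan hE⟩
        ⟨F.indicator (fun _ => (1 : ℂ)), indicator_mem_simpleSpan hF⟩ = (β (E ∩ F) : ℂ)) :
    FormAC b a := by
  have hR := isSetRing_of_nonempty hne hunion hdiff
  have haα : IsFormOf (hR.addContentOfAdditive α hαadd) a := fun E hE F hF => by
    rw [simpleIndicator_of_mem hE, simpleIndicator_of_mem hF]
    exact ha E hE F hF
  have hbβ : IsFormOf (hR.addContentOfAdditive β hβadd) b := fun E hE F hF => by
    rw [simpleIndicator_of_mem hE, simpleIndicator_of_mem hF]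
    exact hb E hE F hF
  intro x hA hB
  obtain ⟨C, hC⟩ := hbform.exists_eventually_re_self_le hB
  refine hbform.tendsto_self_zero hB fun m =>
    hbform.tendsto_of_mem_span ?_ (mem_span_simpleIndicator hR (x m))
  rintro _ ⟨E, hE, rfl⟩
  exact tendsto_apply_simpleIndicator hR hα0 hβ0 hac haα hbβ haform hbform hA hC hE

/-- **Lemma.** If the bounded nonnegative finitely additive set function `β` on a ring of
sets `R` is absolutely continuous with respect to the nonnegative finitely additive set
function `α`, then the associated form `b` is absolutely continuous with respect to the
associated form `a`. -/
theorem form_abs_continuous_of_set_function_abs_continuous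
    {T : Type*} (R : Set (Set T))
    (hne : R.Nonempty)
    (hunion : ∀ E ∈ R, ∀ F ∈ R, E ∪ F ∈ R)
    (hdiff : ∀ E ∈ R, ∀ F ∈ R, E \ F ∈ R)
    (α β : Set T → ℝ)
    (hα0 : ∀ E ∈ R, 0 ≤ α E)
    (hαadd : ∀ E ∈ R, ∀ F ∈ R, Disjoint E F → α (E ∪ F) = α E + α F)
    (hβ0 : ∀ E ∈ R, 0 ≤ β E)
    (hβadd : ∀ E ∈ R, ∀ F ∈ R, Disjoint E F → β (E ∪ F) = β E + β F)
    (hβbdd : ∃ M : ℝ, ∀ E ∈ R, β E ≤ M)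
    (hac : ∀ ε : ℝ, 0 < ε → ∃ δ : ℝ, 0 < δ ∧ ∀ E ∈ R, α E < δ → β E < ε)
    (a b : simpleSpan T R → simpleSpan T R → ℂ)
    (haform : IsNonnegHermForm a) (hbform : IsNonnegHermForm b)
    (ha : ∀ (E : Set T) (hE : E ∈ R) (F : Set T) (hF : F ∈ R),
      a ⟨E.indicator (fun _ => (1 : ℂ)), indicator_mem_simpleSpan hE⟩
        ⟨F.indicator (fun _ => (1 : ℂ)), indicator_mem_simpleSpan hF⟩ = (α (E ∩ F) : ℂ))
    (hb : ∀ (E : Set T) (hE : E ∈ R) (F : Set T) (hF : F ∈ R),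
      b ⟨E.indicator (fun _ => (1 : ℂ)), indicator_mem_simpleSpan hE⟩
        ⟨F.indicator (fun _ => (1 : ℂ)), indicator_mem_simpleSpan hF⟩ = (β (E ∩ F) : ℂ)) :
    FormAC b a :=
  form_abs_continuous_of_set_function_abs_continuous_general R hne hunion hdiff α β hα0 hαadd hβ0
    hβadd hac a b haform hbform ha hb
end

section
/- Let α : R → [0,∞) be a bounded finitely additive set function on a ring of sets R and let β : R → ℂ be a bounded finitely additive set function that is absolutely continuous with respect to α. Then there exist, for each n ∈ ℕ, a natural number k_n, complex numbers c_{n,1},…,c_{n,k_n}, and sets E_{n,1},…,E_{n,k_n} ∈ R such that, defining the finitely additive set functions β_n(E) = Σ_{i=1}^{k_n} c_{n,i} α(E ∩ E_{n,i}) for E ∈ R, one has both β(E) = lim_{n→∞} β_n(E) for every E ∈ R and sup_{E∈R} |β − β_n|(E) → 0 as n → ∞, where |β − β_n| denotes the total variation of β − β_n. -/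
/-!
Treat the real and imaginary parts of `β` separately. For a real finitely additive `γ` with
`γ ≪ α`, pick levels `t j = -B + j h` and approximate Hahn decompositions of `γ - t j • α`, made
decreasing: `A j` is a set on which `γ - t j • α` is almost nonnegative, almost nonpositive off it.
On `D j = A j \ A (j + 1)` one then has `t j • α ≤ γ ≤ (t j + h) • α` up to small errors, so the
simple function `∑ j, t j • 𝟙_{D j}` integrates against `α` to within `h • sup α` of `γ` there;
the parts outside `A 0` and inside `A N` have small `α`-measure once `B` is large, so `γ` is
small on them by absolute continuity. This gives a uniform bound on `|γ E - ∫_E φ dα|` over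
`E ∈ R`, and a bound `M` on a finitely additive complex `ψ` bounds its total variation by `4 M`
(sum separately the terms with nonnegative and negative real and imaginary parts).
-/

open Filter Topology

/-- The total variation `|β|(E)` of a complex-valued set function `β` on a ring of sets `R`:
the supremum of `∑ i, |β (E i)|` over all finite families of pairwise disjoint members of `R`
contained in `E`. -/
noncomputable def totalVariation {T : Type*} (R : Set (Set T)) (β : Set T → ℂ)
    (E : Set T) : ℝ :=
  sSup {x : ℝ | ∃ (k : ℕ) (Es : Fin k → Set T),
    (∀ i, Es i ∈ R) ∧ Pairwise (Function.onFun Disjoint Es) ∧ (∀ i, Es i ⊆ E) ∧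
    x = ∑ i, ‖β (Es i)‖}

open MeasureTheory Finset Function

section

variable {T : Type*}

def FinitelyAdditiveOn {M : Type*} [Add M] (R : Set (Set T)) (γ : Set T → M) : Prop :=
  ∀ E ∈ R, ∀ F ∈ R, Disjoint E F → γ (E ∪ F) = γ E + γ F

variable {R : Set (Set T)}

namespace FinitelyAdditiveOn

section AddCommGroup

variable {M N : Type*} [AddCommGroup M] [AddCommGroup N] {γ γ' : Set T → M}

theorem map_empty (hR : IsSetRing R) (hγ : FinitelyAdditiveOn R γ) : γ ∅ = 0 := by
  simpa using hγ ∅ hR.empty_mem ∅ hR.empty_mem disjoint_bot_left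

theorem comp (hγ : FinitelyAdditiveOn R γ) (f : M →+ N) : FinitelyAdditiveOn R (f ∘ γ) :=
  fun E hE F hF hEF => by simp [hγ E hE F hF hEF]

theorem sub (hγ : FinitelyAdditiveOn R γ) (hγ' : FinitelyAdditiveOn R γ') :
    FinitelyAdditiveOn R (fun E => γ E - γ' E) :=
  fun E hE F hF hEF => by beta_reduce; rw [hγ E hE F hF hEF, hγ' E hE F hF hEF]; abel

theorem inter_add_sdiff (hR : IsSetRing R) (hγ : FinitelyAdditiveOn R γ) {E A : Set T}
    (hE : E ∈ R) (hA : A ∈ R) : γ (E ∩ A) + γ (E \ A) = γ E := by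
  rw [← hγ _ (hR.inter_mem hE hA) _ (hR.sdiff_mem hE hA) Set.disjoint_sdiff_inter.symm,
    Set.inter_union_sdiff]

theorem sum_biUnion (hR : IsSetRing R) (hγ : FinitelyAdditiveOn R γ) {ι : Type*}
    {S : Finset ι} {s : ι → Set T} (hs : ∀ i ∈ S, s i ∈ R)
    (hS : (S : Set ι).PairwiseDisjoint s) :
    γ (⋃ i ∈ S, s i) = ∑ i ∈ S, γ (s i) :=
  addContent_biUnion_eq (m := hR.addContent_of_union γ (hγ.map_empty hR)
    fun hs ht => hγ _ hs _ ht) hR hs hS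

theorem inter_eq_add_sum_inter_sdiff (hR : IsSetRing R) (hγ : FinitelyAdditiveOn R γ)
    {A : ℕ → Set T} (hA : ∀ j, A j ∈ R) (hAanti : Antitone A) {E : Set T} (hE : E ∈ R)
    (n : ℕ) :
    γ (E ∩ A 0) = γ (E ∩ A n) + ∑ j ∈ range n, γ (E ∩ (A j \ A (j + 1))) := by
  induction n with
  | zero => simp
  | succ n ih =>
    rw [ih, sum_range_succ, ← hγ.inter_add_sdiff hR (hR.inter_mem hE (hA n)) (hA (n + 1)),
      Set.inter_assoc, Set.inter_eq_right.2 (hAanti n.le_succ), Set.inter_sdiff_assoc]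
    abel

end AddCommGroup

theorem const_mul {M : Type*} [NonUnitalNonAssocSemiring M] {γ : Set T → M}
    (hγ : FinitelyAdditiveOn R γ) (c : M) : FinitelyAdditiveOn R (fun E => c * γ E) :=
  fun E hE F hF hEF => by beta_reduce; rw [hγ E hE F hF hEF, mul_add]

theorem sum_mul_inter (hR : IsSetRing R) {α : Set T → ℝ} (hα : FinitelyAdditiveOn R α)
    {ι : Type*} (s : Finset ι) (c : ι → ℂ) {A : ι → Set T} (hA : ∀ i, A i ∈ R) :
    FinitelyAdditiveOn R (fun E => ∑ i ∈ s, c i * (α (E ∩ A i) : ℂ)) := by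
  intro E hE F hF hEF
  simp only [← sum_add_distrib, ← mul_add, Set.union_inter_distrib_right]
  refine sum_congr rfl fun i _ => ?_
  rw [hα _ (hR.inter_mem hE (hA i)) _ (hR.inter_mem hF (hA i))
    (hEF.mono Set.inter_subset_left Set.inter_subset_left), Complex.ofReal_add]

theorem sum_abs_le_two_mul (hR : IsSetRing R) {γ : Set T → ℝ} (hγ : FinitelyAdditiveOn R γ)
    {M : ℝ} (hM : ∀ E ∈ R, |γ E| ≤ M) {ι : Type*} [Fintype ι] {W : ι → Set T}
    (hW : ∀ i, W i ∈ R) (hWdisj : Pairwise (Disjoint on W)) :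
    ∑ i, |γ (W i)| ≤ 2 * M := by
  classical
  have hsum : ∀ S : Finset ι, |∑ i ∈ S, γ (W i)| ≤ M := fun S => by
    rw [← hγ.sum_biUnion hR (fun i _ => hW i) (hWdisj.set_pairwise _)]
    exact hM _ (hR.biUnion_mem S fun i _ => hW i)
  have hpos : ∑ i with 0 ≤ γ (W i), |γ (W i)| = ∑ i with 0 ≤ γ (W i), γ (W i) :=
    sum_congr rfl fun i hi => abs_of_nonneg (mem_filter.1 hi).2
  have hneg : ∑ i with ¬0 ≤ γ (W i), |γ (W i)| = -∑ i with ¬0 ≤ γ (W i), γ (W i) := by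
    rw [← sum_neg_distrib]
    exact sum_congr rfl fun i hi => abs_of_neg (not_le.1 (mem_filter.1 hi).2)
  rw [← sum_filter_add_sum_filter_not _ (fun i => 0 ≤ γ (W i)), hpos, hneg]
  linarith [le_abs_self (∑ i with 0 ≤ γ (W i), γ (W i)),
    neg_le_abs (∑ i with ¬0 ≤ γ (W i), γ (W i)), hsum {i | 0 ≤ γ (W i)},
    hsum {i | ¬0 ≤ γ (W i)}]

theorem sum_norm_le_four_mul (hR : IsSetRing R) {β : Set T → ℂ} (hβ : FinitelyAdditiveOn R β)
    {M : ℝ} (hM : ∀ E ∈ R, ‖β E‖ ≤ M) {ι : Type*} [Fintype ι] {W : ι → Set T}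
    (hW : ∀ i, W i ∈ R) (hWdisj : Pairwise (Disjoint on W)) :
    ∑ i, ‖β (W i)‖ ≤ 4 * M := by
  have hre := (hβ.comp Complex.reAddGroupHom).sum_abs_le_two_mul (γ := fun E => (β E).re) hR
    (fun E hE => (Complex.abs_re_le_norm _).trans (hM E hE)) hW hWdisj
  have him := (hβ.comp Complex.imAddGroupHom).sum_abs_le_two_mul (γ := fun E => (β E).im) hR
    (fun E hE => (Complex.abs_im_le_norm _).trans (hM E hE)) hW hWdisj
  calc ∑ i, ‖β (W i)‖ ≤ ∑ i, (|(β (W i)).re| + |(β (W i)).im|) :=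
        sum_le_sum fun i _ => Complex.norm_le_abs_re_add_abs_im _
    _ ≤ 4 * M := by rw [sum_add_distrib]; linarith

end FinitelyAdditiveOn


theorem totalVariation_le (hR : IsSetRing R) {ψ : Set T → ℂ} (hψ : FinitelyAdditiveOn R ψ)
    {M : ℝ} (hM : ∀ E ∈ R, ‖ψ E‖ ≤ M) (E : Set T) : totalVariation R ψ E ≤ 4 * M := by
  refine Real.sSup_le ?_ (by linarith [(norm_nonneg _).trans (hM ∅ hR.empty_mem)])
  rintro _ ⟨k, W, hW, hWdisj, -, rfl⟩
  exact hψ.sum_norm_le_four_mul hR hM hW hWdisj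

theorem norm_le_totalVariation (hR : IsSetRing R) {β : Set T → ℂ}
    (hβ : FinitelyAdditiveOn R β) {M : ℝ} (hM : ∀ E ∈ R, ‖β E‖ ≤ M) {E : Set T}
    (hE : E ∈ R) : ‖β E‖ ≤ totalVariation R β E := by
  refine le_csSup ⟨4 * M, ?_⟩ ⟨1, fun _ => E, fun _ => hE, Subsingleton.pairwise,
    fun _ => subset_rfl, by simp⟩
  rintro _ ⟨k, W, hW, hWdisj, -, rfl⟩
  exact hβ.sum_norm_le_four_mul hR hM hW hWdisj

theorem FinitelyAdditiveOn.exists_almost_hahn_decomposition (hR : IsSetRing R)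
    {γ : Set T → ℝ} (hγ : FinitelyAdditiveOn R γ) (hbdd : BddAbove (γ '' R)) {η : ℝ}
    (hη : 0 < η) :
    ∃ A ∈ R, (∀ E ∈ R, E ⊆ A → -η ≤ γ E) ∧ (∀ E ∈ R, Disjoint E A → γ E ≤ η) := by
  obtain ⟨_, ⟨A, hA, rfl⟩, hA_gt⟩ := exists_lt_of_lt_csSup
    (Set.Nonempty.image γ ⟨∅, hR.empty_mem⟩) (sub_lt_self (sSup (γ '' R)) hη)
  refine ⟨A, hA, fun E hE hEA => ?_, fun E hE hEA => ?_⟩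
  · have hsplit := hγ.inter_add_sdiff hR hA hE
    rw [Set.inter_eq_right.2 hEA] at hsplit
    linarith [le_csSup hbdd ⟨_, hR.sdiff_mem hA hE, rfl⟩]
  · linarith [hγ A hA E hE hEA.symm, le_csSup hbdd ⟨_, hR.union_mem hA hE, rfl⟩]

/-- `A j` is, up to `η`, the positive set of a Hahn decomposition of `γ - t j • α`; the error off
`A j` grows with `j` because the chain is made decreasing by intersecting. -/
structure IsAlmostHahnChain (R : Set (Set T)) (γ α : Set T → ℝ) (t : ℕ → ℝ) (η : ℝ)
    (A : ℕ → Set T) : Prop where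
  mem : ∀ j, A j ∈ R
  antitone : Antitone A
  neg_le : ∀ j, ∀ E ∈ R, E ⊆ A j → -η ≤ γ E - t j * α E
  le : ∀ j, ∀ E ∈ R, Disjoint E (A j) → γ E - t j * α E ≤ (j + 1) * η

theorem exists_isAlmostHahnChain (hR : IsSetRing R) {γ α : Set T → ℝ}
    (hγ : FinitelyAdditiveOn R γ) (hα : FinitelyAdditiveOn R α) (hα0 : ∀ E ∈ R, 0 ≤ α E)
    {Mγ Mα : ℝ} (hMγ : ∀ E ∈ R, γ E ≤ Mγ) (hMα : ∀ E ∈ R, α E ≤ Mα) {t : ℕ → ℝ}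
    (ht : Monotone t) {η : ℝ} (hη : 0 < η) : ∃ A, IsAlmostHahnChain R γ α t η A := by
  have hγt : ∀ j, FinitelyAdditiveOn R (fun E => γ E - t j * α E) :=
    fun j => hγ.sub (hα.const_mul (t j))
  have hbdd : ∀ j, BddAbove ((fun E => γ E - t j * α E) '' R) := fun j => by
    refine ⟨Mγ + |t j| * Mα, ?_⟩
    rintro _ ⟨E, hE, rfl⟩
    nlinarith [neg_abs_le (t j), abs_nonneg (t j), hα0 E hE, hMα E hE, hMγ E hE]
  choose B hBR hB_neg_le hB_le using
    fun j => (hγt j).exists_almost_hahn_decomposition hR (hbdd j) hη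
  have hAR : ∀ j, (⋂ i ≤ j, B i) ∈ R := hR.iInter_le_mem hBR
  refine ⟨fun j => ⋂ i ≤ j, B i, hAR,
    fun i j hij => Set.biInter_subset_biInter_left fun k hk => le_trans hk hij,
    fun j E hE hEA => hB_neg_le j E hE (hEA.trans (Set.biInter_subset_of_mem (le_refl j))), ?_⟩
  intro j
  induction j with
  | zero => intro E hE hEA; simpa using hB_le 0 E hE (by simpa using hEA)
  | succ j ih =>
    intro E hE hEA
    rw [Set.biInter_le_succ] at hEA
    have hout := ih _ (hR.sdiff_mem hE (hAR j)) Set.disjoint_sdiff_left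
    have hin := hB_le (j + 1) _ (hR.inter_mem hE (hAR j))
      (Set.disjoint_left.2 fun x hx hxB => Set.disjoint_left.1 hEA hx.1 ⟨hx.2, hxB⟩)
    have hsplit := (hγt (j + 1)).inter_add_sdiff hR hE (hAR j)
    have hmono := mul_le_mul_of_nonneg_right (ht j.le_succ) (hα0 _ (hR.sdiff_mem hE (hAR j)))
    push_cast
    linarith

namespace IsAlmostHahnChain

variable {γ α : Set T → ℝ} {t : ℕ → ℝ} {η : ℝ} {A : ℕ → Set T}

theorem abs_sub_le (hC : IsAlmostHahnChain R γ α t η A) (hα0 : ∀ E ∈ R, 0 ≤ α E) {h : ℝ}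
    (hh : 0 ≤ h) (hη : 0 ≤ η) {j : ℕ} (ht : t (j + 1) ≤ t j + h) {V : Set T} (hV : V ∈ R)
    (hVA : V ⊆ A j \ A (j + 1)) : |γ V - t j * α V| ≤ h * α V + (j + 2) * η := by
  have hlow := hC.neg_le j V hV (hVA.trans Set.sdiff_subset)
  have hup := hC.le (j + 1) V hV (Set.disjoint_of_subset_left hVA Set.disjoint_sdiff_left)
  have hαV := hα0 V hV
  push_cast at hup
  rw [abs_le]
  constructor <;> nlinarith

theorem abs_sub_sum_le (hC : IsAlmostHahnChain R γ α t η A) (hR : IsSetRing R)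
    (hγ : FinitelyAdditiveOn R γ) (hα : FinitelyAdditiveOn R α) (hα0 : ∀ E ∈ R, 0 ≤ α E)
    {Mα : ℝ} (hMα : ∀ E ∈ R, α E ≤ Mα) {h : ℝ} (hh : 0 ≤ h) (hη : 0 ≤ η)
    (ht : ∀ j, t (j + 1) ≤ t j + h) (N : ℕ) {U : Set T} (hU : U ∈ R) :
    |γ U - ∑ j : Fin N, t j * α (U ∩ (A j \ A (j + 1)))| ≤
      |γ (U \ A 0)| + |γ (U ∩ A N)| + (h * Mα + N * (N + 1) * η) := by
  set D : ℕ → Set T := fun j => U ∩ (A j \ A (j + 1))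
  have hD : ∀ j, D j ∈ R := fun j => hR.inter_mem hU (hR.sdiff_mem (hC.mem j) (hC.mem (j + 1)))
  have hγU : γ U = γ (U \ A 0) + γ (U ∩ A N) + ∑ j ∈ range N, γ (D j) := by
    rw [← hγ.inter_add_sdiff hR hU (hC.mem 0),
      hγ.inter_eq_add_sum_inter_sdiff hR hC.mem hC.antitone hU N]
    abel
  have hαD : ∑ j ∈ range N, α (D j) ≤ Mα := by
    have := hα.inter_eq_add_sum_inter_sdiff hR hC.mem hC.antitone hU N
    linarith [hMα _ (hR.inter_mem hU (hC.mem 0)), hα0 _ (hR.inter_mem hU (hC.mem N))]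
  have hmid : ∀ j ∈ range N, |γ (D j) - t j * α (D j)| ≤ h * α (D j) + (N + 1) * η := by
    intro j hj
    have hjN : (j : ℝ) + 2 ≤ N + 1 := by exact_mod_cast Nat.add_le_add_right (mem_range.1 hj) 1
    calc |γ (D j) - t j * α (D j)| ≤ h * α (D j) + (j + 2) * η :=
          hC.abs_sub_le hα0 hh hη (ht j) (hD j) Set.inter_subset_right
      _ ≤ h * α (D j) + (N + 1) * η := by gcongr
  calc |γ U - ∑ j : Fin N, t j * α (D j)|
      = |γ (U \ A 0) + γ (U ∩ A N) + ∑ j ∈ range N, (γ (D j) - t j * α (D j))| := by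
        rw [Fin.sum_univ_eq_sum_range (fun j => t j * α (D j)), sum_sub_distrib, hγU,
          add_sub_assoc]
    _ ≤ |γ (U \ A 0)| + |γ (U ∩ A N)| + ∑ j ∈ range N, |γ (D j) - t j * α (D j)| :=
        (abs_add_three _ _ _).trans (by gcongr; exact abs_sum_le_sum_abs _ _)
    _ ≤ |γ (U \ A 0)| + |γ (U ∩ A N)| + ∑ j ∈ range N, (h * α (D j) + (N + 1) * η) := by
        gcongr with j hj
        exact hmid j hj
    _ ≤ |γ (U \ A 0)| + |γ (U ∩ A N)| + (h * Mα + N * (N + 1) * η) := by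
        rw [sum_add_distrib, ← mul_sum, sum_const, card_range, nsmul_eq_mul, ← mul_assoc]
        gcongr

end IsAlmostHahnChain

theorem exists_sum_mul_inter_approx_real (hR : IsSetRing R) {γ α : Set T → ℝ}
    (hγ : FinitelyAdditiveOn R γ) (hα : FinitelyAdditiveOn R α) (hα0 : ∀ E ∈ R, 0 ≤ α E)
    {Mγ Mα : ℝ} (hMγ : ∀ E ∈ R, |γ E| ≤ Mγ) (hMα : ∀ E ∈ R, α E ≤ Mα)
    (hac : ∀ ε : ℝ, 0 < ε → ∃ δ : ℝ, 0 < δ ∧ ∀ E ∈ R, α E < δ → |γ E| < ε)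
    {ε : ℝ} (hε : 0 < ε) :
    ∃ (k : ℕ) (c : Fin k → ℝ) (A : Fin k → Set T),
      (∀ i, A i ∈ R) ∧ ∀ E ∈ R, |γ E - ∑ i, c i * α (E ∩ A i)| ≤ ε := by
  obtain ⟨δ, hδ, hδγ⟩ := hac (ε / 4) (by positivity)
  have hMγ0 : 0 ≤ Mγ := (abs_nonneg _).trans (hMγ ∅ hR.empty_mem)
  have hMα0 : 0 ≤ Mα := (hα0 ∅ hR.empty_mem).trans (hMα ∅ hR.empty_mem)
  set B := (Mγ + 2) / δ
  set h := ε / (4 * (Mα + 1))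
  have hB : 0 < B := by positivity
  have hh : 0 < h := by positivity
  obtain ⟨N, hN⟩ := exists_nat_ge (2 * B / h)
  set η := min 1 (ε / (4 * (N + 1) ^ 2))
  have hη : 0 < η := lt_min one_pos (by positivity)
  set t : ℕ → ℝ := fun j => -B + j * h
  have ht : Monotone t := fun i j hij => by simp only [t]; gcongr
  obtain ⟨A, hA⟩ := exists_isAlmostHahnChain hR hγ hα hα0
    (fun E hE => (le_abs_self _).trans (hMγ E hE)) hMα ht hη
  refine ⟨N, fun j => t j, fun j => A j \ A (j + 1),
    fun j => hR.sdiff_mem (hA.mem _) (hA.mem _), fun U hU => ?_⟩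
  have hBδ : B * δ = Mγ + 2 := div_mul_cancel₀ _ hδ.ne'
  have hsmall : ∀ V ∈ R, B * α V ≤ Mγ + 1 → |γ V| < ε / 4 := fun V hV hBV =>
    hδγ V hV (lt_of_mul_lt_mul_left (by linarith) hB.le)
  have hbot : |γ (U \ A 0)| < ε / 4 := by
    have hV := hR.sdiff_mem hU (hA.mem 0)
    refine hsmall _ hV ?_
    have := hA.le 0 _ hV Set.disjoint_sdiff_left
    norm_num [t] at this
    linarith [min_le_left 1 (ε / (4 * (N + 1) ^ 2)), (abs_le.1 (hMγ _ hV)).1]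
  have htop : |γ (U ∩ A N)| < ε / 4 := by
    have hV := hR.inter_mem hU (hA.mem N)
    refine hsmall _ hV ?_
    have := hA.neg_le N _ hV Set.inter_subset_right
    have hBt : B ≤ t N := by simp only [t]; linarith [(div_le_iff₀ hh).1 hN]
    nlinarith [min_le_left 1 (ε / (4 * (N + 1) ^ 2)), (abs_le.1 (hMγ _ hV)).2, hα0 _ hV]
  have hmid : h * Mα + N * (N + 1) * η ≤ ε / 2 := by
    have h₁ : h * Mα ≤ ε / 4 := by
      simp only [h]; rw [div_mul_eq_mul_div, div_le_div_iff₀ (by positivity) (by norm_num)]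
      nlinarith
    have h₂ : (N : ℝ) * (N + 1) * η ≤ ε / 4 := calc
      (N : ℝ) * (N + 1) * η ≤ (N + 1) ^ 2 * (ε / (4 * (N + 1) ^ 2)) := by
        gcongr
        · nlinarith
        · exact min_le_right _ _
      _ = ε / 4 := by field_simp
    linarith
  linarith [hA.abs_sub_sum_le hR hγ hα hα0 hMα hh.le hη.le
    (fun j => by simp only [t]; push_cast; linarith) N hU]

theorem exists_sum_mul_inter_approx (hR : IsSetRing R) {α : Set T → ℝ} {β : Set T → ℂ}
    (hα : FinitelyAdditiveOn R α) (hβ : FinitelyAdditiveOn R β) (hα0 : ∀ E ∈ R, 0 ≤ α E)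
    {Mα Mβ : ℝ} (hMα : ∀ E ∈ R, α E ≤ Mα) (hMβ : ∀ E ∈ R, ‖β E‖ ≤ Mβ)
    (hac : ∀ ε : ℝ, 0 < ε → ∃ δ : ℝ, 0 < δ ∧ ∀ E ∈ R, α E < δ → ‖β E‖ < ε)
    {ε : ℝ} (hε : 0 < ε) :
    ∃ (k : ℕ) (c : Fin k → ℂ) (A : Fin k → Set T),
      (∀ i, A i ∈ R) ∧ ∀ E ∈ R, ‖β E - ∑ i, c i * (α (E ∩ A i) : ℂ)‖ ≤ ε := by
  obtain ⟨k₁, a, A₁, hA₁, h₁⟩ := exists_sum_mul_inter_approx_real hR (γ := fun E => (β E).re)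
    (hβ.comp Complex.reAddGroupHom) hα hα0
    (fun E hE => (Complex.abs_re_le_norm _).trans (hMβ E hE)) hMα
    (fun ε hε => (hac ε hε).imp fun _ ⟨hδ, hlt⟩ =>
      ⟨hδ, fun E hE hαE => (Complex.abs_re_le_norm _).trans_lt (hlt E hE hαE)⟩)
    (half_pos hε)
  obtain ⟨k₂, b, A₂, hA₂, h₂⟩ := exists_sum_mul_inter_approx_real hR (γ := fun E => (β E).im)
    (hβ.comp Complex.imAddGroupHom) hα hα0
    (fun E hE => (Complex.abs_im_le_norm _).trans (hMβ E hE)) hMα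
    (fun ε hε => (hac ε hε).imp fun _ ⟨hδ, hlt⟩ =>
      ⟨hδ, fun E hE hαE => (Complex.abs_im_le_norm _).trans_lt (hlt E hE hαE)⟩)
    (half_pos hε)
  refine ⟨k₁ + k₂, Fin.append (fun i => (a i : ℂ)) (fun i => b i * Complex.I),
    Fin.append A₁ A₂, Fin.addCases (by simpa using hA₁) (by simpa using hA₂), fun E hE => ?_⟩
  calc _ ≤ _ := Complex.norm_le_abs_re_add_abs_im _
    _ ≤ ε := by
      simp only [Fin.sum_univ_add, Fin.append_left, Fin.append_right, Complex.sub_re,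
        Complex.add_re, Complex.re_sum, Complex.mul_re, Complex.ofReal_re, Complex.ofReal_im,
        mul_zero, sub_zero, Complex.I_re, Complex.I_im, mul_one, sub_self, zero_mul,
        Complex.mul_im, add_zero, sum_const_zero, Complex.sub_im, Complex.add_im, Complex.im_sum,
        zero_add]
      linarith [h₁ E hE, h₂ E hE]

end

/-- **Theorem (Radon–Nikodym–Darst, uniform part).** Let `α` be a bounded nonnegative
finitely additive set function and `β` a bounded complex-valued finitely additive set
function on a ring of sets `R`, with `β` absolutely continuous with respect to `α`. Then
there is a sequence of `R`-simple functions `φ_n = ∑ i, c n i • χ_{Es n i}` such that with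
`β_n E = ∑ i, c n i * α (E ∩ Es n i)` one has `β E = lim_n β_n E` for every `E ∈ R`, and
moreover `sup_{E ∈ R} |β - β_n| (E) → 0`. -/
theorem radon_nikodym_darst_uniform
    {T : Type*} (R : Set (Set T))
    (hne : R.Nonempty)
    (hunion : ∀ E ∈ R, ∀ F ∈ R, E ∪ F ∈ R)
    (hdiff : ∀ E ∈ R, ∀ F ∈ R, E \ F ∈ R)
    (α : Set T → ℝ) (β : Set T → ℂ)
    (hα0 : ∀ E ∈ R, 0 ≤ α E)
    (hαadd : ∀ E ∈ R, ∀ F ∈ R, Disjoint E F → α (E ∪ F) = α E + α F)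
    (hβadd : ∀ E ∈ R, ∀ F ∈ R, Disjoint E F → β (E ∪ F) = β E + β F)
    (hαbdd : ∃ M : ℝ, ∀ E ∈ R, α E ≤ M)
    (hβbdd : ∃ M : ℝ, ∀ E ∈ R, ‖β E‖ ≤ M)
    (hac : ∀ ε : ℝ, 0 < ε → ∃ δ : ℝ, 0 < δ ∧
      ∀ E ∈ R, α E < δ → totalVariation R β E < ε) :
    ∃ (k : ℕ → ℕ) (c : (n : ℕ) → Fin (k n) → ℂ) (Es : (n : ℕ) → Fin (k n) → Set T),
      (∀ (n : ℕ) (i : Fin (k n)), Es n i ∈ R) ∧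
      (∀ E ∈ R, Tendsto (fun n => ∑ i, c n i * (α (E ∩ Es n i) : ℂ)) atTop (𝓝 (β E))) ∧
      (∀ ε : ℝ, 0 < ε → ∃ N : ℕ, ∀ n ≥ N, ∀ E ∈ R,
        totalVariation R (fun F => β F - ∑ i, c n i * (α (F ∩ Es n i) : ℂ)) E ≤ ε) := by
  have hR : IsSetRing R := ⟨by obtain ⟨E, hE⟩ := hne; simpa using hdiff E hE E hE,
    fun E F hE hF => hunion E hE F hF, fun E F hE hF => hdiff E hE F hF⟩
  have hα : FinitelyAdditiveOn R α := hαadd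
  have hβ : FinitelyAdditiveOn R β := hβadd
  obtain ⟨Mα, hMα⟩ := hαbdd
  obtain ⟨Mβ, hMβ⟩ := hβbdd
  have hβac : ∀ ε : ℝ, 0 < ε → ∃ δ : ℝ, 0 < δ ∧ ∀ E ∈ R, α E < δ → ‖β E‖ < ε :=
    fun ε hε => (hac ε hε).imp fun _ ⟨hδ, hlt⟩ => ⟨hδ, fun E hE hαE =>
      (norm_le_totalVariation hR hβ hMβ hE).trans_lt (hlt E hE hαE)⟩
  choose k c Es hEs happrox using fun n : ℕ => exists_sum_mul_inter_approx hR hα hβ hα0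
    hMα hMβ hβac (Nat.one_div_pos_of_nat (n := n))
  have hlim : Tendsto (fun n : ℕ => 1 / ((n : ℝ) + 1)) atTop (𝓝 0) :=
    tendsto_one_div_add_atTop_nhds_zero_nat
  refine ⟨k, c, Es, hEs, fun E hE => ?_, fun ε hε => ?_⟩
  · rw [tendsto_iff_norm_sub_tendsto_zero]
    exact squeeze_zero (fun _ => norm_nonneg _)
      (fun n => (norm_sub_rev _ _).trans_le (happrox n E hE)) hlim
  · obtain ⟨N, hN⟩ := eventually_atTop.1
      ((hlim.const_mul 4).eventually (ge_mem_nhds (by simpa using hε)))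
    exact ⟨N, fun n hn E _ => (totalVariation_le hR
      (hβ.sub (hα.sum_mul_inter hR _ (c n) (hEs n))) (happrox n) E).trans (hN n hn)⟩
end

section
/- Let A be a Banach *-algebra (a complete normed complex *-algebra with submultiplicative norm and isometric involution) and let v, w be representable positive functionals on A such that w is absolutely continuous with respect to v. Then there exists a sequence (a_n) in A such that the functionals w_n(a) := v(a_n* a) satisfy ‖w − w_n‖ → 0, i.e. sup{|w(a) − v(a_n* a)| : a ∈ A, ‖a‖ ≤ 1} → 0 as n → ∞. -/
/-!
Send `a : A` to `(πv a ζv, πw a ζw)` in the Hilbert sum `Hv ⊕₂ Hw` and let `G` be the closure of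
its range. Absolute continuity of `w` with respect to `v` says exactly that `G` contains no
nonzero vector `(0, y)`. As `πv(A)ζv` is dense in `Hv`, no nonzero vector of `G` is then orthogonal
to all `(πv a ζv, 0)`, so the orthogonal projections of these vectors onto `G` are dense in `G` and
approximate the projection of `(0, ζw)` by some `(πv aₙ ζv, 0)`. Finally
`w b - v (aₙ⋆ b) = ⟪(0, ζw) - (πv aₙ ζv, 0), (πv b ζv, πw b ζw)⟫`, whose right vector lies in `G`
and has norm at most `‖ζv‖ + ‖ζw‖` for `‖b‖ ≤ 1`, since `*`-representations of Banach
`*`-algebras are contractive.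
-/

open Filter Topology
open scoped ComplexInnerProductSpace ComplexOrder

/-- `w` is absolutely continuous with respect to `v`. -/
def FunctionalAC {A : Type*} [NonUnitalRing A] [StarRing A] (w v : A → ℂ) : Prop :=
  ∀ a : ℕ → A,
    Tendsto (fun n => v (star (a n) * a n)) atTop (𝓝 0) →
    Tendsto (fun p : ℕ × ℕ => w (star (a p.1 - a p.2) * (a p.1 - a p.2))) atTop (𝓝 0) →
    Tendsto (fun n => w (star (a n) * a n)) atTop (𝓝 0)

theorem quasispectrum.norm_le_norm_of_mem {𝕜 A : Type*} [NontriviallyNormedField 𝕜]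
    [CompleteSpace 𝕜] [NonUnitalNormedRing A] [CompleteSpace A] [NormedSpace 𝕜 A]
    [SMulCommClass 𝕜 A A] [IsScalarTower 𝕜 A A] {a : A} {k : 𝕜} (hk : k ∈ quasispectrum 𝕜 a) :
    ‖k‖ ≤ ‖a‖ := by
  rw [Unitization.quasispectrum_eq_spectrum_inr' 𝕜 𝕜,
    ← AlgEquiv.spectrum_eq (WithLp.unitizationAlgEquiv 𝕜).symm (a : Unitization 𝕜 A)] at hk
  have hone : ‖(1 : WithLp 1 (Unitization 𝕜 A))‖ = 1 := by
    simp [WithLp.unitization_norm_def,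
      show WithLp.ofLp (1 : WithLp 1 (Unitization 𝕜 A)) = 1 from rfl]
  have hinr : (WithLp.unitizationAlgEquiv 𝕜).symm (a : Unitization 𝕜 A) = WithLp.toLp 1 ↑a := rfl
  simpa [hone, hinr, WithLp.unitization_norm_inr] using spectrum.norm_le_norm_mul_of_mem hk

theorem NonUnitalStarAlgHom.norm_apply_le_of_complete {A B : Type*} [NonUnitalNormedRing A]
    [CompleteSpace A] [StarRing A] [NormedStarGroup A] [NormedSpace ℂ A] [SMulCommClass ℂ A A]
    [IsScalarTower ℂ A A] [CStarAlgebra B] (π : A →⋆ₙₐ[ℂ] B) (a : A) : ‖π a‖ ≤ ‖a‖ := by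
  have hsa {s : A} (hs : IsSelfAdjoint s) : ‖π s‖ ≤ ‖s‖ := by
    have : spectralRadius ℂ (π s) ≤ ‖s‖₊ := iSup₂_le fun k hk =>
      ENNReal.coe_le_coe.mpr <| quasispectrum.norm_le_norm_of_mem <|
        NonUnitalAlgHom.quasispectrum_apply_subset π s (spectrum_subset_quasispectrum ℂ _ hk)
    rw [(hs.map π).spectralRadius_eq_nnnorm] at this
    exact_mod_cast this
  have hsq : ‖π a‖ * ‖π a‖ ≤ ‖a‖ * ‖a‖ := calc
    ‖π a‖ * ‖π a‖ = ‖π (star a * a)‖ := by rw [map_mul, map_star, CStarRing.norm_star_mul_self]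
    _ ≤ ‖star a * a‖ := hsa (.star_mul_self a)
    _ ≤ ‖a‖ * ‖a‖ := by simpa using norm_mul_le (star a) a
  exact (mul_self_le_mul_self_iff (norm_nonneg _) (norm_nonneg _)).mpr hsq

namespace Submodule

variable {𝕜 E : Type*} [RCLike 𝕜] [NormedAddCommGroup E] [InnerProductSpace 𝕜 E]
  (K : Submodule 𝕜 E) [CompleteSpace K] {S : Submodule 𝕜 E}

local notation "⟪" x ", " y "⟫" => inner 𝕜 x y

theorem topologicalClosure_map_orthogonalProjectionOnto_eq_top
    (hKS : ∀ g ∈ K, g ∈ Sᗮ → g = 0) :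
    (S.map (K.orthogonalProjectionOnto : E →ₗ[𝕜] K)).topologicalClosure = ⊤ := by
  rw [topologicalClosure_eq_top_iff, eq_bot_iff]
  intro g hg
  have hgS : (g : E) ∈ Sᗮ := fun s hs => by
    rw [← inner_orthogonalProjectionOnto_eq_of_mem_right]
    exact hg _ (mem_map_of_mem hs)
  exact Subtype.ext (hKS g g.2 hgS)

theorem exists_seq_mem_norm_inner_sub_le
    (hKS : ∀ g ∈ K, g ∈ Sᗮ → g = 0) (x : E) :
    ∃ s : ℕ → E, (∀ n, s n ∈ S) ∧
      ∀ ε > 0, ∃ N, ∀ n ≥ N, ∀ g ∈ K, ‖⟪x - s n, g⟫‖ ≤ ε * ‖g‖ := by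
  set P := K.orthogonalProjectionOnto
  have hx : P x ∈ closure (P '' S) := by
    change P x ∈ ((S.map (P : E →ₗ[𝕜] K)).topologicalClosure : Set K)
    rw [K.topologicalClosure_map_orthogonalProjectionOnto_eq_top hKS]
    trivial
  obtain ⟨t, ht, hlim⟩ := mem_closure_iff_seq_limit.mp hx
  choose s hsS hst using ht
  refine ⟨s, hsS, fun ε hε => ?_⟩
  obtain ⟨N, hN⟩ := Metric.tendsto_atTop.mp hlim ε hε
  refine ⟨N, fun n hn g hg => ?_⟩
  calc ‖⟪x - s n, g⟫‖ = ‖⟪P x - P (s n), ⟨g, hg⟩⟫‖ := by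
        rw [← map_sub, inner_orthogonalProjectionOnto_eq_of_mem_right]
    _ ≤ ‖P x - P (s n)‖ * ‖g‖ := norm_inner_le_norm _ _
    _ ≤ ε * ‖g‖ := by
        gcongr
        rw [← dist_eq_norm, dist_comm, hst]
        exact (hN n hn).le

end Submodule

theorem WithLp.prod_norm_toLp_le_add {p : ENNReal} [Fact (1 ≤ p)] {E F : Type*}
    [SeminormedAddCommGroup E] [SeminormedAddCommGroup F] (x : E) (y : F) :
    ‖WithLp.toLp p (x, y)‖ ≤ ‖x‖ + ‖y‖ := calc
  _ = ‖WithLp.toLp p (x, 0) + WithLp.toLp p (0, y)‖ := by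
    rw [← WithLp.toLp_add, Prod.mk_add_mk, add_zero, zero_add]
  _ ≤ ‖x‖ + ‖y‖ := (norm_add_le _ _).trans_eq (by rw [norm_toLp_fst, norm_toLp_snd])

section Graph

variable {𝕜 A E F : Type*} [RCLike 𝕜] [AddCommGroup A] [Module 𝕜 A]
  [NormedAddCommGroup E] [InnerProductSpace 𝕜 E] [NormedAddCommGroup F] [InnerProductSpace 𝕜 F]
  (T : A →ₗ[𝕜] E) (U : A →ₗ[𝕜] F)

/-- The operator `T a ↦ U a` is closable. -/
def GraphClosable : Prop :=
  ∀ (a : ℕ → A) (y : F), Tendsto (T ∘ a) atTop (𝓝 0) → Tendsto (U ∘ a) atTop (𝓝 y) → y = 0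

def graphClosure : Submodule 𝕜 (WithLp 2 (E × F)) :=
  (LinearMap.range
    ((WithLp.linearEquiv 2 𝕜 (E × F)).symm.toLinearMap ∘ₗ T.prod U)).topologicalClosure

instance [CompleteSpace E] [CompleteSpace F] : CompleteSpace (graphClosure T U) :=
  (Submodule.isClosed_topologicalClosure _).completeSpace_coe

theorem toLp_mem_graphClosure (a : A) : WithLp.toLp 2 (T a, U a) ∈ graphClosure T U :=
  Submodule.le_topologicalClosure _ ⟨a, rfl⟩

variable {T U}

theorem GraphClosable.eq_zero_of_mem_graphClosure (hTU : GraphClosable T U)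
    {g : WithLp 2 (E × F)} (hg : g ∈ graphClosure T U) (hg₁ : g.fst = 0) : g = 0 := by
  rw [graphClosure, ← SetLike.mem_coe, Submodule.topologicalClosure_coe] at hg
  obtain ⟨t, ht, hlim⟩ := mem_closure_iff_seq_limit.mp hg
  choose a ha using ht
  obtain rfl : t = fun n => WithLp.toLp 2 (T (a n), U (a n)) := funext fun n => (ha n).symm
  have hg₂ : g.snd = 0 := hTU a _ (hg₁ ▸ ((WithLp.continuous_fst 2 E F).tendsto g).comp hlim)
    (((WithLp.continuous_snd 2 E F).tendsto g).comp hlim)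
  exact WithLp.ofLp_injective 2 (Prod.ext hg₁ hg₂)

theorem GraphClosable.eq_zero_of_mem_graphClosure_of_mem_orthogonal (hTU : GraphClosable T U)
    (hT : DenseRange T) {g : WithLp 2 (E × F)} (hg : g ∈ graphClosure T U)
    (hgT : g ∈ (LinearMap.range
      ((WithLp.linearEquiv 2 𝕜 (E × F)).symm.toLinearMap ∘ₗ LinearMap.inl 𝕜 E F ∘ₗ T))ᗮ) :
    g = 0 := by
  refine hTU.eq_zero_of_mem_graphClosure hg ?_
  refine hT.eq_of_inner_right (𝕜 := 𝕜) fun a => ?_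
  simpa [WithLp.prod_inner_apply] using hgT _ ⟨a, rfl⟩

end Graph

section Representation

variable {A H : Type*} [NonUnitalRing A] [StarRing A] [Module ℂ A]
  [NormedAddCommGroup H] [InnerProductSpace ℂ H] [CompleteSpace H]

@[simps]
noncomputable def orbitMap (π : A →⋆ₙₐ[ℂ] (H →L[ℂ] H)) (ζ : H) : A →ₗ[ℂ] H where
  toFun a := π a ζ
  map_add' _ _ := by simp
  map_smul' _ _ := by simp

theorem inner_orbitMap_orbitMap {π : A →⋆ₙₐ[ℂ] (H →L[ℂ] H)} {ζ : H} {v : A → ℂ}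
    (hv : ∀ a, v a = ⟪ζ, π a ζ⟫) (a b : A) :
    ⟪orbitMap π ζ a, orbitMap π ζ b⟫ = v (star a * b) := by
  rw [hv, map_mul, map_star, orbitMap_apply, orbitMap_apply, mul_apply_eq_comp,
    ContinuousLinearMap.star_eq_adjoint, ContinuousLinearMap.adjoint_inner_right]

theorem graphClosable_orbitMap_of_functionalAC {Hw : Type*} [NormedAddCommGroup Hw]
    [InnerProductSpace ℂ Hw] [CompleteSpace Hw] {πv : A →⋆ₙₐ[ℂ] (H →L[ℂ] H)} {ζv : H}
    {πw : A →⋆ₙₐ[ℂ] (Hw →L[ℂ] Hw)} {ζw : Hw} {v w : A → ℂ}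
    (hv : ∀ a, v a = ⟪ζv, πv a ζv⟫) (hw : ∀ a, w a = ⟪ζw, πw a ζw⟫) (hwv : FunctionalAC w v) :
    GraphClosable (orbitMap πv ζv) (orbitMap πw ζw) := by
  intro a y hv0 hwy
  have hfst : Tendsto (Prod.fst : ℕ × ℕ → ℕ) atTop atTop :=
    prod_atTop_atTop_eq (α := ℕ) (β := ℕ) ▸ tendsto_fst
  have hsnd : Tendsto (Prod.snd : ℕ × ℕ → ℕ) atTop atTop :=
    prod_atTop_atTop_eq (α := ℕ) (β := ℕ) ▸ tendsto_snd
  have hwy₂ : Tendsto (fun p : ℕ × ℕ => orbitMap πw ζw (a p.1 - a p.2)) atTop (𝓝 0) := by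
    simpa only [map_sub, sub_self, Function.comp_apply] using (hwy.comp hfst).sub (hwy.comp hsnd)
  have hv0' := hv0.inner (𝕜 := ℂ) hv0
  have hwy₂' := hwy₂.inner (𝕜 := ℂ) hwy₂
  have hwy' := hwy.inner (𝕜 := ℂ) hwy
  simp only [Function.comp_apply, inner_orbitMap_orbitMap hv, inner_orbitMap_orbitMap hw,
    inner_zero_left] at hv0' hwy₂' hwy'
  exact inner_self_eq_zero.mp (tendsto_nhds_unique hwy' (hwv a hv0' hwy₂'))

end Representation

theorem norm_orbitMap_le {A H : Type*} [NonUnitalNormedRing A] [CompleteSpace A] [StarRing A]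
    [NormedStarGroup A] [NormedSpace ℂ A] [SMulCommClass ℂ A A] [IsScalarTower ℂ A A]
    [NormedAddCommGroup H] [InnerProductSpace ℂ H] [CompleteSpace H]
    (π : A →⋆ₙₐ[ℂ] (H →L[ℂ] H)) (ζ : H) (a : A) : ‖orbitMap π ζ a‖ ≤ ‖a‖ * ‖ζ‖ :=
  (π a).le_of_opNorm_le (π.norm_apply_le_of_complete a) ζ

theorem radon_nikodym_banach_star_algebra_general
    {A : Type*} [NonUnitalNormedRing A] [CompleteSpace A] [StarRing A]
    [NormedStarGroup A] [NormedSpace ℂ A] [SMulCommClass ℂ A A]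
    [IsScalarTower ℂ A A]
    (v w : A →ₗ[ℂ] ℂ)
    {Hv : Type*} [NormedAddCommGroup Hv] [InnerProductSpace ℂ Hv] [CompleteSpace Hv]
    (πv : A →⋆ₙₐ[ℂ] (Hv →L[ℂ] Hv)) (ζv : Hv)
    (hv_cyc : DenseRange fun a : A => πv a ζv)
    (hv_rep : ∀ a : A, v a = ⟪ζv, πv a ζv⟫)
    {Hw : Type*} [NormedAddCommGroup Hw] [InnerProductSpace ℂ Hw] [CompleteSpace Hw]
    (πw : A →⋆ₙₐ[ℂ] (Hw →L[ℂ] Hw)) (ζw : Hw)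
    (hw_rep : ∀ a : A, w a = ⟪ζw, πw a ζw⟫)
    (hac : FunctionalAC w v) :
    ∃ a : ℕ → A, ∀ ε : ℝ, 0 < ε → ∃ N : ℕ, ∀ n ≥ N, ∀ b : A, ‖b‖ ≤ 1 →
      ‖w b - v (star (a n) * b)‖ ≤ ε := by
  set Lv := orbitMap πv ζv
  set Lw := orbitMap πw ζw
  have hclos : GraphClosable Lv Lw := graphClosable_orbitMap_of_functionalAC hv_rep hw_rep hac
  obtain ⟨s, hsS, hs⟩ := (graphClosure Lv Lw).exists_seq_mem_norm_inner_sub_le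
    (fun g hg => hclos.eq_zero_of_mem_graphClosure_of_mem_orthogonal hv_cyc hg)
    (WithLp.toLp 2 (0, ζw))
  choose a ha using hsS
  set C := ‖ζv‖ + ‖ζw‖ + 1
  refine ⟨a, fun ε hε => ?_⟩
  obtain ⟨N, hN⟩ := hs (ε / C) (by positivity)
  refine ⟨N, fun n hn b hb => ?_⟩
  have hdiff : w b - v (star (a n) * b) =
      ⟪WithLp.toLp 2 (0, ζw) - s n, WithLp.toLp 2 (Lv b, Lw b)⟫ := by
    rw [← ha n, inner_sub_left, ← inner_orbitMap_orbitMap hv_rep, hw_rep]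
    simp [WithLp.prod_inner_apply, Lv, Lw]
  have hbound : ‖WithLp.toLp 2 (Lv b, Lw b)‖ ≤ C := calc
    _ ≤ ‖Lv b‖ + ‖Lw b‖ := WithLp.prod_norm_toLp_le_add _ _
    _ ≤ ‖ζv‖ + ‖ζw‖ := by
      gcongr
      · exact (norm_orbitMap_le πv ζv b).trans (mul_le_of_le_one_left (norm_nonneg _) hb)
      · exact (norm_orbitMap_le πw ζw b).trans (mul_le_of_le_one_left (norm_nonneg _) hb)
    _ ≤ C := le_add_of_nonneg_right zero_le_one
  calc ‖w b - v (star (a n) * b)‖ ≤ ε / C * ‖WithLp.toLp 2 (Lv b, Lw b)‖ :=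
        hdiff ▸ hN n hn _ (toLp_mem_graphClosure Lv Lw b)
    _ ≤ ε / C * C := by gcongr
    _ = ε := div_mul_cancel₀ _ (by positivity)

/-- **Corollary.** Let `A` be a Banach `*`-algebra and `v, w` representable positive
functionals on `A` such that `w` is absolutely continuous with respect to `v`.  Then there
is a sequence `(a n)` such that the functionals `w_n b := v (star (a n) * b)` converge to
`w` in norm: `sup {|w b - v (star (a n) * b)| : ‖b‖ ≤ 1} → 0`. -/
theorem radon_nikodym_banach_star_algebra
    {A : Type*} [NonUnitalNormedRing A] [CompleteSpace A] [StarRing A]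
    [NormedStarGroup A] [NormedSpace ℂ A] [SMulCommClass ℂ A A]
    [IsScalarTower ℂ A A] [StarModule ℂ A]
    (v w : A →ₗ[ℂ] ℂ)
    (hv : ∀ a : A, 0 ≤ v (star a * a)) (hw : ∀ a : A, 0 ≤ w (star a * a))
    {Hv : Type*} [NormedAddCommGroup Hv] [InnerProductSpace ℂ Hv] [CompleteSpace Hv]
    (πv : A →⋆ₙₐ[ℂ] (Hv →L[ℂ] Hv)) (ζv : Hv)
    (hv_cyc : DenseRange fun a : A => πv a ζv)
    (hv_rep : ∀ a : A, v a = ⟪ζv, πv a ζv⟫)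
    {Hw : Type*} [NormedAddCommGroup Hw] [InnerProductSpace ℂ Hw] [CompleteSpace Hw]
    (πw : A →⋆ₙₐ[ℂ] (Hw →L[ℂ] Hw)) (ζw : Hw)
    (hw_cyc : DenseRange fun a : A => πw a ζw)
    (hw_rep : ∀ a : A, w a = ⟪ζw, πw a ζw⟫)
    (hac : FunctionalAC w v) :
    ∃ a : ℕ → A, ∀ ε : ℝ, 0 < ε → ∃ N : ℕ, ∀ n ≥ N, ∀ b : A, ‖b‖ ≤ 1 →
      ‖w b - v (star (a n) * b)‖ ≤ ε :=
  radon_nikodym_banach_star_algebra_general v w πv ζv hv_cyc hv_rep πw ζw hw_rep hac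
end
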